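/- arXiv:1312.4387 — 2 statements merged into one kernel-verified Lean document; each statement's English description precedes it below -/
import Mathlib

section
/- Let p be an odd prime, X a closed topological manifold of dimension n, E and F real oriented vector bundles over X, and L : E → F an orientation preserving bundle morphism. If the k-th Wu classes differ, q_k(E) ≠ q_k(F) ∈ H^{2(p−1)k}(X;ℤ_p), then the covering dimension of Σ(L) is at least n − 2(p−1)k; in particular, if q₁(E) ≠ q₁(F) then dim Σ(L) ≥ n − 2(p−1). -/
set_option autoImplicit false

noncomputable section

open Bundle Set Module

/-- `HasCovDimLE Y m` : every finite open cover of `Y` has a finite open refinement in which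
no point is included in more than `m + 1` elements. -/
def HasCovDimLE (Y : Type) [TopologicalSpace Y] (m : ℕ) : Prop :=
  ∀ U : Finset (Set Y), (∀ u ∈ U, IsOpen u) → ⋃₀ (U : Set (Set Y)) = Set.univ →
    ∃ V : Finset (Set Y), (∀ v ∈ V, IsOpen v) ∧ ⋃₀ (V : Set (Set Y)) = Set.univ ∧
      (∀ v ∈ V, ∃ u ∈ U, v ⊆ u) ∧
      ∀ y : Y, {v ∈ (V : Set (Set Y)) | y ∈ v}.ncard ≤ m + 1

/-- The covering dimension of a topological space, as an element of `ℕ∞` (`⊤` if no finite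
`m` works). -/
def covDim (Y : Type) [TopologicalSpace Y] : ℕ∞ :=
  sInf {d : ℕ∞ | ∃ m : ℕ, d = (m : ℕ∞) ∧ HasCovDimLE Y m}

/-- The underlying graded groups of: relative singular homology `H_k(Y, A; R)` (with
`H_k(Y; R) = H_k(Y, ∅; R)`), singular cohomology `H^k(Y; G)`, Čech cohomology `Ȟ^k(Y; R)`
and the `Ext`-term `Ext¹_R(H_{k-1}(Y; R), G)` of the universal coefficient theorem. -/
structure CohomologyData (R : Type) [CommRing R] (G : Type) [AddCommGroup G] [Module R G] where
  /-- relative singular homology `H_k(Y, A; R)` -/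
  Hrel : ∀ (Y : Type) [TopologicalSpace Y], Set Y → ℤ → Type
  instHrelAdd : ∀ (Y : Type) [TopologicalSpace Y] (A : Set Y) (k : ℤ), AddCommGroup (Hrel Y A k)
  instHrelMod : ∀ (Y : Type) [TopologicalSpace Y] (A : Set Y) (k : ℤ), Module R (Hrel Y A k)
  /-- singular cohomology `H^k(Y; G)` -/
  Hco : ∀ (Y : Type) [TopologicalSpace Y], ℤ → Type
  instHcoAdd : ∀ (Y : Type) [TopologicalSpace Y] (k : ℤ), AddCommGroup (Hco Y k)
  /-- Čech cohomology `Ȟ^k(Y; R)` -/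
  Hcech : ∀ (Y : Type) [TopologicalSpace Y], ℤ → Type
  instHcechAdd : ∀ (Y : Type) [TopologicalSpace Y] (k : ℤ), AddCommGroup (Hcech Y k)
  /-- the group `Ext¹_R(H_{k-1}(Y; R), G)` appearing in the universal coefficient theorem -/
  ExtUCT : ∀ (Y : Type) [TopologicalSpace Y], ℤ → Type
  instExtAdd : ∀ (Y : Type) [TopologicalSpace Y] (k : ℤ), AddCommGroup (ExtUCT Y k)

attribute [instance] CohomologyData.instHrelAdd CohomologyData.instHrelMod
  CohomologyData.instHcoAdd CohomologyData.instHcechAdd CohomologyData.instExtAdd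

/-- An axiomatization of the package consisting of singular homology of pairs (with
coefficients in a PID `R`), singular cohomology (with coefficients in an `R`-module `G`) and
Čech cohomology (with coefficients in `R`), together with: functoriality, the Kronecker
pairing `α` (written `pair`, `α^k(η)(ξ) = ⟨η, ξ⟩`) and its naturality, the universal
coefficient exact sequence
`0 → Ext¹_R(H_{k-1}(Y;R), G) →^{β^k} H^k(Y;G) →^{α^k} Hom_R(H_k(Y;R), G) → 0`
(exactness at `H^k` and vanishing of the `Ext`-term on free homology), the homology long
exact sequence of a pair (the part `im j_* = ker π_*`), and the fact that non-vanishing of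
`Ȟ^m` of a compact Hausdorff space forces its covering dimension to be at least `m`.
All of these are classical facts about the (co)homology of topological spaces; they are the
only properties used in the paper. -/
structure Theory (R : Type) [CommRing R] [IsDomain R] [IsPrincipalIdealRing R]
    (G : Type) [AddCommGroup G] [Module R G] extends CohomologyData R G where
  /-- functoriality of relative homology for maps of pairs -/
  hmap : ∀ {Y Z : Type} [TopologicalSpace Y] [TopologicalSpace Z]
    (f : C(Y, Z)) {A : Set Y} {B : Set Z}, Set.MapsTo f A B →
    ∀ k : ℤ, Hrel Y A k →ₗ[R] Hrel Z B k
  /-- contravariant functoriality of singular cohomology -/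
  cmap : ∀ {Y Z : Type} [TopologicalSpace Y] [TopologicalSpace Z]
    (f : C(Y, Z)) (k : ℤ), Hco Z k →+ Hco Y k
  cmap_id : ∀ (Y : Type) [TopologicalSpace Y] (k : ℤ) (x : Hco Y k),
    cmap (ContinuousMap.id Y) k x = x
  /-- contravariant functoriality of Čech cohomology -/
  ccmap : ∀ {Y Z : Type} [TopologicalSpace Y] [TopologicalSpace Z]
    (f : C(Y, Z)) (k : ℤ), Hcech Z k →+ Hcech Y k
  /-- the Kronecker pairing `α^k : H^k(Y;G) → Hom_R(H_k(Y;R), G)`, `α^k(η)(ξ) = ⟨η, ξ⟩` -/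
  pair : ∀ (Y : Type) [TopologicalSpace Y] (k : ℤ),
    Hco Y k →+ (Hrel Y (∅ : Set Y) k →ₗ[R] G)
  /-- naturality of the Kronecker pairing: `⟨f^*η, ξ⟩ = ⟨η, f_*ξ⟩` -/
  pair_natural : ∀ {Y Z : Type} [TopologicalSpace Y] [TopologicalSpace Z] (f : C(Y, Z)) (k : ℤ)
    (η : Hco Z k) (ξ : Hrel Y (∅ : Set Y) k),
    pair Y k (cmap f k η) ξ = pair Z k η (hmap f (Set.mapsTo_empty _ _) k ξ)
  /-- the map `β^k : Ext¹_R(H_{k-1}(Y;R), G) → H^k(Y;G)` of the universal coefficient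
  theorem -/
  betaMap : ∀ (Y : Type) [TopologicalSpace Y] (k : ℤ), ExtUCT Y k →+ Hco Y k
  /-- exactness of the universal coefficient sequence at `H^k(Y;G)`: `ker α^k = im β^k` -/
  uct_exact : ∀ (Y : Type) [TopologicalSpace Y] (k : ℤ) (x : Hco Y k),
    pair Y k x = 0 ↔ x ∈ Set.range (betaMap Y k)
  /-- `Ext¹_R(H_{k-1}(Y;R), G)` vanishes if `H_{k-1}(Y;R)` is a free `R`-module -/
  uct_free : ∀ (Y : Type) [TopologicalSpace Y] (k : ℤ),
    Module.Free R (Hrel Y (∅ : Set Y) (k - 1)) → ∀ z : ExtUCT Y k, betaMap Y k z = 0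
  /-- exactness of the long exact homology sequence of the pair `(X, X ∖ A)` at `H_k(X)`:
  `π_* ξ = 0` iff `ξ` comes from `H_k(X ∖ A)` -/
  les_exact : ∀ (X : Type) [TopologicalSpace X] (A : Set X) (k : ℤ)
    (ξ : Hrel X (∅ : Set X) k),
    hmap (ContinuousMap.id X) (Set.mapsTo_empty _ _) k ξ = (0 : Hrel X Aᶜ k) ↔
      ∃ ζ : Hrel (↥(Aᶜ)) (∅ : Set ↥(Aᶜ)) k,
        hmap (⟨Subtype.val, continuous_subtype_val⟩ : C(↥(Aᶜ), X))
          (Set.mapsTo_empty _ _) k ζ = ξ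
  /-- if the Čech cohomology `Ȟ^m(Y;R)` of a compact Hausdorff space is non-trivial
  then its covering dimension is at least `m` -/
  dim_cech : ∀ (Y : Type) [TopologicalSpace Y] [CompactSpace Y] [T2Space Y] (m : ℕ),
    (∃ x : Hcech Y (m : ℤ), x ≠ 0) → (m : ℕ∞) ≤ covDim Y

/-- `X` is `R`-orientable (with respect to the homology theory `T`) if there is a compatible
continuous choice `o(λ)` of generators of the local homology modules
`H_n(X, X ∖ {λ}; R) ≅ R`: i.e. an open cover `{U_i}` of `X` and classes
`μ_i ∈ H_n(X, X ∖ U_i; R)` restricting to `o(λ)` for every `λ ∈ U_i`. -/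
def ROrientable {R : Type} [CommRing R] [IsDomain R] [IsPrincipalIdealRing R]
    {G : Type} [AddCommGroup G] [Module R G] (T : Theory R G)
    (n : ℕ) (X : Type) [TopologicalSpace X] : Prop :=
  ∃ o : ∀ x : X, T.Hrel X ({x}ᶜ) (n : ℤ),
    (∀ x, Submodule.span R {o x} = ⊤) ∧
    ∃ (ι : Type) (U : ι → Set X), (∀ i, IsOpen (U i)) ∧ (∀ x, ∃ i, x ∈ U i) ∧
      ∃ μ : ∀ i, T.Hrel X ((U i)ᶜ) (n : ℤ),
        ∀ (i) (x) (hx : x ∈ U i),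
          T.hmap (ContinuousMap.id X)
            ((Set.mapsTo_id _).mono_right
              (Set.compl_subset_compl.mpr (Set.singleton_subset_iff.mpr hx)))
            (n : ℤ) (μ i) = o x

/-- The full package: the (co)homology theories together with Poincaré–Lefschetz duality for
closed `R`-orientable topological `n`-manifolds (in the form of [Bredon, Cor. VI.8.4]: for a
closed subset `A ⊆ X` there is a commutative square consisting of the duality isomorphisms
`Ȟ^{n-k}(X;R) ≅ H_k(X;R)` and `Ȟ^{n-k}(A;R) ≅ H_k(X, X∖A;R)`, the restriction
`i^* : Ȟ^{n-k}(X;R) → Ȟ^{n-k}(A;R)` and `π_* : H_k(X;R) → H_k(X, X∖A;R)`), and the fact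
that every closed topological manifold is `R`-orientable when `2 = 0` in `R`. -/
structure GoodTheory (R : Type) [CommRing R] [IsDomain R] [IsPrincipalIdealRing R]
    (G : Type) [AddCommGroup G] [Module R G] extends Theory R G where
  /-- Poincaré–Lefschetz duality -/
  pd : ∀ (n : ℕ) (X : Type) [TopologicalSpace X] [T2Space X]
    [ChartedSpace (EuclideanSpace ℝ (Fin n)) X] [CompactSpace X],
    ROrientable toTheory n X →
    ∀ (k : ℤ) (A : Set X), IsClosed A →
      ∃ (pdX : Hcech X ((n : ℤ) - k) ≃+ Hrel X (∅ : Set X) k)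
        (pdA : Hcech (↥A) ((n : ℤ) - k) ≃+ Hrel X Aᶜ k),
        ∀ η : Hcech X ((n : ℤ) - k),
          pdA (ccmap (⟨Subtype.val, continuous_subtype_val⟩ : C(↥A, X)) ((n : ℤ) - k) η) =
          hmap (ContinuousMap.id X) (Set.mapsTo_empty _ _) k (pdX η)
  /-- every closed topological manifold is `R`-orientable if `2 = 0` in `R` -/
  orient_two : (2 : R) = 0 → ∀ (n : ℕ) (X : Type) [TopologicalSpace X] [T2Space X]
    [ChartedSpace (EuclideanSpace ℝ (Fin n)) X] [CompactSpace X],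
    ROrientable toTheory n X

/-- A (finite rank) vector bundle over the base `Y` with scalar field `𝕜`, packaged as a
structure: a model fibre `F` and a family of fibres `E y` together with all the data making
it a topological vector bundle. -/
structure VB (𝕜 : Type) [NontriviallyNormedField 𝕜] (Y : Type) [TopologicalSpace Y] :
    Type 1 where
  /-- the model fibre -/
  F : Type
  [nF : NormedAddCommGroup F]
  [sF : NormedSpace 𝕜 F]
  [fdF : FiniteDimensional 𝕜 F]
  /-- the fibres -/
  E : Y → Type
  [aE : ∀ y, AddCommGroup (E y)]
  [mE : ∀ y, Module 𝕜 (E y)]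
  [tE : ∀ y, TopologicalSpace (E y)]
  [tT : TopologicalSpace (Bundle.TotalSpace F E)]
  [fb : FiberBundle F E]
  [vb : VectorBundle 𝕜 F E]

attribute [instance] VB.nF VB.sF VB.fdF VB.aE VB.mE VB.tE VB.tT VB.fb VB.vb

/-- A morphism of vector bundles over `X`: a fibrewise (continuous) linear map which is
continuous as a map of total spaces. -/
def IsBundleMorphism {𝕜 : Type} [NontriviallyNormedField 𝕜] {X : Type} [TopologicalSpace X]
    (V W : VB 𝕜 X) (L : ∀ x, V.E x →L[𝕜] W.E x) : Prop :=
  Continuous fun p : Bundle.TotalSpace V.F V.E =>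
    (Bundle.TotalSpace.mk p.1 (L p.1 p.2) : Bundle.TotalSpace W.F W.E)

/-- The singular set `Σ(L) = {λ ∈ X | L_λ ∉ GL(E_λ, F_λ)}` of a bundle morphism `L`:
the set of points of the base over which `L` is not a linear isomorphism of fibres. -/
def singularSet {𝕜 : Type} [NontriviallyNormedField 𝕜] {X : Type} [TopologicalSpace X]
    (V W : VB 𝕜 X) (L : ∀ x, V.E x →L[𝕜] W.E x) : Set X :=
  {x : X | ¬ Function.Bijective (L x)}

/-- `o` is an orientation of the real vector bundle `V` of rank `r`: a function assigning an
orientation to each fibre in such a way that near each point of the base the local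
trivialization carries the orientations of the fibres into one fixed orientation of the
model fibre. -/
def IsBundleOrientation {Y : Type} [TopologicalSpace Y] (r : ℕ) (V : VB ℝ Y)
    (o : ∀ y, Orientation ℝ (V.E y) (Fin r)) : Prop :=
  ∀ y₀ : Y, ∃ ω : Orientation ℝ V.F (Fin r),
    ∀ (y) (hy : y ∈ (trivializationAt V.F V.E y₀).baseSet),
      Orientation.map (Fin r)
        ((trivializationAt V.F V.E y₀).continuousLinearEquivAt ℝ y hy).toLinearEquiv
        (o y) = ω

/-- A real vector bundle is orientable if it admits an orientation. -/
def BundleOrientable {Y : Type} [TopologicalSpace Y] (V : VB ℝ Y) : Prop :=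
  ∃ o : ∀ y, Orientation ℝ (V.E y) (Fin (Module.finrank ℝ V.F)),
    IsBundleOrientation (Module.finrank ℝ V.F) V o

/-- An oriented real vector bundle of rank `r` over `Y`. -/
structure OVB (Y : Type) [TopologicalSpace Y] (r : ℕ) extends VB ℝ Y where
  /-- the fibrewise orientation -/
  ori : ∀ y, Orientation ℝ (E y) (Fin r)
  isOri : IsBundleOrientation r toVB ori

/-- A bundle morphism `L : E → F` between oriented bundles is orientation preserving if
`Σ(L) ≠ X` and its restriction over `X ∖ Σ(L)` carries the orientation of `E` to the
orientation of `F` on each fibre. -/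
def IsOrientPreservingMorphism {X : Type} [TopologicalSpace X] {r : ℕ}
    (V W : OVB X r) (L : ∀ x, V.E x →L[ℝ] W.E x) : Prop :=
  singularSet V.toVB W.toVB L ≠ Set.univ ∧
  ∀ (x) (hx : Function.Bijective (L x)),
    Orientation.map (Fin r)
      (LinearEquiv.ofBijective ((L x : V.E x →ₗ[ℝ] W.E x)) hx) (V.ori x) = W.ori x

/-- An `H^k(·;G)`-valued characteristic class for oriented (rank `r`) real bundles: it
assigns to every oriented bundle over a base `Y` a class `e(E) ∈ H^k(Y;G)`, such that
`e(E₁) = f^* e(E₂)` whenever a continuous map `f : Y → Z` is covered by an orientation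
preserving (fibrewise isomorphic, continuous) bundle map `E₁ → E₂`. -/
structure OrientedCharClass {R : Type} [CommRing R] [IsDomain R] [IsPrincipalIdealRing R]
    {G : Type} [AddCommGroup G] [Module R G] (T : GoodTheory R G) (r : ℕ) (k : ℤ) where
  /-- the value of the characteristic class on an oriented bundle -/
  cls : ∀ (Y : Type) [TopologicalSpace Y], OVB Y r → T.Hco Y k
  /-- naturality with respect to orientation preserving bundle maps covering continuous
  maps -/
  natural : ∀ (Y Z : Type) [TopologicalSpace Y] [TopologicalSpace Z]
    (V : OVB Y r) (W : OVB Z r) (f : C(Y, Z)) (φ : ∀ y, V.E y ≃ₗ[ℝ] W.E (f y)),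
    Continuous (fun p : Bundle.TotalSpace V.F V.E =>
      (Bundle.TotalSpace.mk (f p.1) (φ p.1 p.2) : Bundle.TotalSpace W.F W.E)) →
    (∀ y, Orientation.map (Fin r) (φ y) (V.ori y) = W.ori (f y)) →
    cls Y V = T.cmap f k (cls Z W)

/-!
Over `X ∖ Σ(L)` the morphism `L` is an orientation preserving isomorphism, so by naturality
`q(E)` and `q(F)` have the same restriction to `X ∖ Σ(L)`. If `dim Σ(L) < n - m` with
`m = 2(p-1)k`, then `Ȟ^{n-m}(Σ(L); ℤ_p) = 0`, and Poincaré–Lefschetz duality turns this into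
the vanishing of `H_m(X) → H_m(X, X ∖ Σ(L))`: every `m`-cycle of `X` comes from `X ∖ Σ(L)`.
Hence `q(E) - q(F)` pairs to zero with all of `H_m(X; ℤ_p)`, and over a field the universal
coefficient theorem makes the Kronecker pairing injective, so `q(E) = q(F)`.
-/

namespace VB

variable {𝕜 : Type} [NontriviallyNormedField 𝕜] {Y B : Type} [TopologicalSpace Y]
  [TopologicalSpace B]

def pullback (V : VB 𝕜 B) (f : C(Y, B)) : VB 𝕜 Y where
  F := V.F
  E := f *ᵖ V.E
  aE y := inferInstanceAs (AddCommGroup (V.E (f y)))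
  mE y := inferInstanceAs (Module 𝕜 (V.E (f y)))
  fb := FiberBundle.pullback f
  vb := VectorBundle.pullback (F := V.F) (E := V.E) 𝕜 f

end VB

namespace OVB

variable {Y B : Type} [TopologicalSpace Y] [TopologicalSpace B] {r : ℕ}

def pullback (V : OVB B r) (f : C(Y, B)) : OVB Y r where
  toVB := V.toVB.pullback f
  ori y := V.ori (f y)
  isOri y₀ := by
    obtain ⟨ω, hω⟩ := V.isOri (f y₀)
    refine ⟨ω, fun y hy => ?_⟩
    have hchart : ((trivializationAt V.F V.E (f y₀)).continuousLinearEquivAt ℝ (f y) hy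
        ).toLinearEquiv = ((trivializationAt (V.toVB.pullback f).F (V.toVB.pullback f).E y₀
          ).continuousLinearEquivAt ℝ y hy).toLinearEquiv :=
      LinearEquiv.ext fun _ => rfl
    rw [← hchart]
    exact hω (f y) hy

end OVB

namespace OrientedCharClass

variable {R : Type} [CommRing R] [IsDomain R] [IsPrincipalIdealRing R] {G : Type}
  [AddCommGroup G] [Module R G] {T : GoodTheory R G} {r : ℕ} {k : ℤ}

theorem cmap_cls_eq_of_bijective (q : OrientedCharClass T r k) {X Y : Type} [TopologicalSpace X]
    [TopologicalSpace Y] {V W : OVB X r} {L : ∀ x, V.E x →L[ℝ] W.E x}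
    (hL : IsBundleMorphism V.toVB W.toVB L) (hLor : IsOrientPreservingMorphism V W L)
    (f : C(Y, X)) (hf : ∀ y, Function.Bijective (L (f y))) :
    T.cmap f k (q.cls X V) = T.cmap f k (q.cls X W) := by
  -- both sides are the class of the pullback `f^* V`
  rw [← q.natural Y X (V.pullback f) V f (fun y => LinearEquiv.refl ℝ (V.E (f y)))
      (Pullback.continuous_lift V.F V.E f) fun y => DFunLike.congr_fun (Orientation.map_refl _) _,
    ← q.natural Y X (V.pullback f) W f
      (fun y => LinearEquiv.ofBijective (L (f y) : V.E (f y) →ₗ[ℝ] W.E (f y)) (hf y))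
      (hL.comp (Pullback.continuous_lift V.F V.E f)) fun y => hLor.2 (f y) (hf y)]

end OrientedCharClass

section SingularSet

open Topology

variable {X : Type} [TopologicalSpace X] {V W : VB ℝ X} {L : ∀ x, V.E x →L[ℝ] W.E x}

theorem IsBundleMorphism.continuousOn_inCoordinates (hL : IsBundleMorphism V W L) (x₀ : X) :
    ContinuousOn (fun x => ContinuousLinearMap.inCoordinates V.F V.E W.F W.E x₀ x x₀ x (L x))
      ((trivializationAt V.F V.E x₀).baseSet ∩ (trivializationAt W.F W.E x₀).baseSet) := by
  set eV := trivializationAt V.F V.E x₀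
  set eW := trivializationAt W.F W.E x₀
  refine continuousOn_clm_apply.mpr fun v => ?_
  have hlift : ContinuousOn (fun x => TotalSpace.mk' V.F x (eV.symm x v)) eV.baseSet :=
    eV.continuousOn_symm.comp (continuous_id.prodMk continuous_const).continuousOn
      fun x hx => ⟨hx, trivial⟩
  have hcoord : ContinuousOn (fun x => (eW ⟨x, L x (eV.symm x v)⟩).2) (eV.baseSet ∩ eW.baseSet) :=
    continuous_snd.comp_continuousOn <| eW.continuousOn.comp
      (hL.comp_continuousOn (hlift.mono inter_subset_left)) fun x hx => eW.mem_source.mpr hx.2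
  refine hcoord.congr fun x hx => ?_
  simp only [ContinuousLinearMap.inCoordinates, ContinuousLinearMap.comp_apply,
    Trivialization.continuousLinearMapAt_apply]
  rw [Trivialization.coe_linearMapAt_of_mem _ hx.2, Trivialization.symmL_apply _ hx.1]

theorem bijective_inCoordinates_iff {x₀ x : X} (hxV : x ∈ (trivializationAt V.F V.E x₀).baseSet)
    (hxW : x ∈ (trivializationAt W.F W.E x₀).baseSet) :
    Function.Bijective (ContinuousLinearMap.inCoordinates V.F V.E W.F W.E x₀ x x₀ x (L x)) ↔
      Function.Bijective (L x) := by
  rw [ContinuousLinearMap.inCoordinates_eq hxV hxW]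
  simp only [ContinuousLinearMap.coe_comp, ContinuousLinearEquiv.coe_coe]
  rw [Function.Bijective.of_comp_iff' (ContinuousLinearEquiv.bijective _),
    Function.Bijective.of_comp_iff _ (ContinuousLinearEquiv.bijective _)]

theorem isClosed_singularSet (hL : IsBundleMorphism V W L) : IsClosed (singularSet V W L) := by
  refine isOpen_compl_iff.mp (isOpen_iff_mem_nhds.mpr fun x₀ hx₀ => ?_)
  set U := (trivializationAt V.F V.E x₀).baseSet ∩ (trivializationAt W.F W.E x₀).baseSet
  have hU : U ∈ 𝓝 x₀ :=
    ((trivializationAt V.F V.E x₀).open_baseSet.inter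
      (trivializationAt W.F W.E x₀).open_baseSet).mem_nhds
      ⟨mem_baseSet_trivializationAt V.F V.E x₀, mem_baseSet_trivializationAt W.F W.E x₀⟩
  set A := fun x => ContinuousLinearMap.inCoordinates V.F V.E W.F W.E x₀ x x₀ x (L x)
  have hbij : Function.Bijective (A x₀) :=
    (bijective_inCoordinates_iff (mem_of_mem_nhds hU).1 (mem_of_mem_nhds hU).2).mpr
      (not_not.mp hx₀)
  have hequiv : range ((↑) : (V.F ≃L[ℝ] W.F) → V.F →L[ℝ] W.F) ∈ 𝓝 (A x₀) :=
    ContinuousLinearEquiv.nhds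
      (LinearEquiv.ofBijective (A x₀ : V.F →ₗ[ℝ] W.F) hbij).toContinuousLinearEquiv
  filter_upwards [hU, (hL.continuousOn_inCoordinates x₀).continuousAt hU hequiv]
    with x hxU ⟨e', he'⟩
  beta_reduce at he'
  exact not_not.mpr ((bijective_inCoordinates_iff hxU.1 hxU.2).mp (he' ▸ e'.bijective))

end SingularSet

namespace Theory

variable {R : Type} [CommRing R] [IsDomain R] [IsPrincipalIdealRing R] {G : Type}
  [AddCommGroup G] [Module R G] (T : Theory R G)

theorem cech_eq_zero_of_covDim_lt {Y : Type} [TopologicalSpace Y] [CompactSpace Y] [T2Space Y]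
    {m : ℕ} (hY : covDim Y < m) (η : T.Hcech Y m) : η = 0 := by
  by_contra hη
  exact (T.dim_cech Y m ⟨η, hη⟩).not_gt hY

theorem pair_eq_zero_of_cmap_compl_eq_zero {X : Type} [TopologicalSpace X] {A : Set X} {k : ℤ}
    {d : T.Hco X k} (hd : T.cmap ⟨Subtype.val, continuous_subtype_val⟩ k d = (0 : T.Hco ↥Aᶜ k))
    (hπ : ∀ ξ : T.Hrel X ∅ k,
      T.hmap (ContinuousMap.id X) (mapsTo_empty _ _) k ξ = (0 : T.Hrel X Aᶜ k)) :
    T.pair X k d = 0 := by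
  ext ξ
  obtain ⟨ζ, rfl⟩ := (T.les_exact X A k ξ).mp (hπ ξ)
  rw [LinearMap.zero_apply, ← T.pair_natural, hd, map_zero, LinearMap.zero_apply]

end Theory

theorem Theory.eq_zero_of_pair_eq_zero {K : Type} [Field K] {G : Type} [AddCommGroup G]
    [Module K G] (T : Theory K G) {X : Type} [TopologicalSpace X] {k : ℤ} {d : T.Hco X k}
    (hd : T.pair X k d = 0) : d = 0 := by
  obtain ⟨z, rfl⟩ := (T.uct_exact X k d).mp hd
  exact T.uct_free X k (Module.Free.of_divisionRing _ _) z

namespace GoodTheory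

variable {R : Type} [CommRing R] [IsDomain R] [IsPrincipalIdealRing R] {G : Type}
  [AddCommGroup G] [Module R G] (T : GoodTheory R G)

theorem hmap_compl_eq_zero_of_cech_eq_zero {n : ℕ} {X : Type} [TopologicalSpace X] [T2Space X]
    [ChartedSpace (EuclideanSpace ℝ (Fin n)) X] [CompactSpace X] (hor : ROrientable T.toTheory n X)
    {A : Set X} (hA : IsClosed A) {k : ℤ} (hA0 : ∀ η : T.Hcech A (n - k), η = 0)
    (ξ : T.Hrel X ∅ k) :
    T.hmap (ContinuousMap.id X) (mapsTo_empty _ _) k ξ = (0 : T.Hrel X Aᶜ k) := by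
  obtain ⟨pdX, pdA, hpd⟩ := T.pd n X hor k A hA
  rw [← pdX.apply_symm_apply ξ, ← hpd, hA0 (T.ccmap _ _ _), map_zero]

end GoodTheory

theorem GoodTheory.eq_zero_of_cmap_compl_eq_zero {K : Type} [Field K] {G : Type}
    [AddCommGroup G] [Module K G] (T : GoodTheory K G) {n : ℕ} {X : Type} [TopologicalSpace X]
    [T2Space X] [ChartedSpace (EuclideanSpace ℝ (Fin n)) X] [CompactSpace X]
    (hor : ROrientable T.toTheory n X) {A : Set X} (hA : IsClosed A) {k : ℤ}
    (hA0 : ∀ η : T.Hcech A (n - k), η = 0) {d : T.Hco X k}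
    (hd : T.cmap ⟨Subtype.val, continuous_subtype_val⟩ k d = (0 : T.Hco ↥Aᶜ k)) : d = 0 :=
  T.eq_zero_of_pair_eq_zero <|
    T.pair_eq_zero_of_cmap_compl_eq_zero hd (T.hmap_compl_eq_zero_of_cech_eq_zero hor hA hA0)

theorem covDim_ge_of_wu_general
    (p : ℕ) [Fact p.Prime]
    (T : GoodTheory (ZMod p) (ZMod p))
    (n : ℕ) (X : Type) [TopologicalSpace X] [T2Space X]
    [ChartedSpace (EuclideanSpace ℝ (Fin n)) X] [CompactSpace X]
    (hor : ROrientable T.toTheory n X)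
    (r : ℕ) (V W : OVB X r)
    (L : ∀ x, V.E x →L[ℝ] W.E x) (hL : IsBundleMorphism V.toVB W.toVB L)
    (hLor : IsOrientPreservingMorphism V W L)
    (k : ℕ) (q : OrientedCharClass T r ((2 * (p - 1) * k : ℕ) : ℤ))
    (hq : q.cls X V ≠ q.cls X W) :
    ((n - 2 * (p - 1) * k : ℕ) : ℕ∞) ≤ covDim ↥(singularSet V.toVB W.toVB L) := by
  set S := singularSet V.toVB W.toVB L
  rcases le_or_gt n (2 * (p - 1) * k) with hnm | hmn
  · simp [Nat.sub_eq_zero_of_le hnm]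
  have hS : IsClosed S := isClosed_singularSet hL
  have : CompactSpace S := isCompact_iff_compactSpace.mp hS.isCompact
  by_contra hdim
  have hcech := T.cech_eq_zero_of_covDim_lt (not_le.mp hdim)
  rw [Nat.cast_sub hmn.le] at hcech
  have hrestr := q.cmap_cls_eq_of_bijective hL hLor ⟨Subtype.val, continuous_subtype_val⟩
    fun x : ↥Sᶜ => not_not.mp x.2
  exact hq <| sub_eq_zero.mp <| T.eq_zero_of_cmap_compl_eq_zero hor hS hcech <| by
    rw [map_sub, hrestr, sub_self]

/-- Let `p` be an odd prime, `X` a closed (`ℤ_p`-orientable) topological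
manifold of dimension `n`, `E` and `F` real oriented vector bundles over `X`, and
`L : E → F` an orientation preserving bundle morphism. If the `k`-th Wu classes differ,
`q_k(E) ≠ q_k(F) ∈ H^{2(p-1)k}(X;ℤ_p)`, then the covering dimension of `Σ(L)` is at least
`n - 2(p-1)k` (in particular, for `k = 1`, if `q₁(E) ≠ q₁(F)` then `dim Σ(L) ≥ n - 2(p-1)`).
(The `k`-th Wu class is represented by an `H^{2(p-1)k}(·;ℤ_p)`-valued characteristic class
`q` for oriented bundles, since its only property used is naturality; `ℤ_p` being a field,
`im β = 0`, so `q_k(E) ≠ q_k(F)` is equivalent to the universal-coefficient condition of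
the theorem for oriented bundles.) -/
theorem covDim_ge_of_wu
    (p : ℕ) [Fact p.Prime] (hodd : Odd p)
    (T : GoodTheory (ZMod p) (ZMod p))
    (n : ℕ) (X : Type) [TopologicalSpace X] [T2Space X]
    [ChartedSpace (EuclideanSpace ℝ (Fin n)) X] [CompactSpace X]
    (hor : ROrientable T.toTheory n X)
    (r : ℕ) (V W : OVB X r)
    (L : ∀ x, V.E x →L[ℝ] W.E x) (hL : IsBundleMorphism V.toVB W.toVB L)
    (hLor : IsOrientPreservingMorphism V W L)
    (k : ℕ) (q : OrientedCharClass T r ((2 * (p - 1) * k : ℕ) : ℤ))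
    (hq : q.cls X V ≠ q.cls X W) :
    ((n - 2 * (p - 1) * k : ℕ) : ℕ∞) ≤ covDim ↥(singularSet V.toVB W.toVB L) :=
  covDim_ge_of_wu_general p T n X hor r V W L hL hLor k q hq
end
end

section
/- Let R be a principal ideal domain, X a closed R-orientable topological manifold of dimension n, and A ⊂ X a closed subset. If a class ξ ∈ H_k(X;R) has non-trivial image π_*ξ under the map H_k(X;R) → H_k(X, X∖A;R) induced by inclusion of pairs, then the Poincaré dual η ∈ Ȟ^{n−k}(X;R) of ξ restricts to a non-trivial class i*η ∈ Ȟ^{n−k}(A;R) under the inclusion i : A ↪ X; in particular the covering dimension of A is at least n − k. -/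
set_option autoImplicit false

noncomputable section

open Bundle Set Module

theorem ne_zero_of_comm_square {M N P Q F : Type} [Zero P] [Zero Q] [FunLike F P Q]
    [ZeroHomClass F P Q] (res : M → P) (proj : N → Q) (e : M ≃ N) (φ : F)
    (hcomm : ∀ x, φ (res x) = proj (e x)) {y : N} (hy : proj y ≠ 0) :
    res (e.symm y) ≠ 0 := by
  intro hzero
  apply hy
  rw [← e.apply_symm_apply y, ← hcomm, hzero, map_zero]

theorem Theory.toNat_le_covDim_of_ne_zero {R : Type} [CommRing R] [IsDomain R]
    [IsPrincipalIdealRing R] {G : Type} [AddCommGroup G] [Module R G] (T : Theory R G)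
    {Y : Type} [TopologicalSpace Y] [CompactSpace Y] [T2Space Y] {m : ℤ}
    {x : T.Hcech Y m} (hx : x ≠ 0) : (m.toNat : ℕ∞) ≤ covDim Y := by
  rcases le_or_gt 0 m with hm | hm
  · lift m to ℕ using hm
    exact T.dim_cech Y m ⟨x, hx⟩
  · simp [Int.toNat_of_nonpos hm.le]

theorem poincare_dual_restricts_nontrivially_general
    {R : Type} [CommRing R] [IsDomain R] [IsPrincipalIdealRing R]
    {G : Type} [AddCommGroup G] [Module R G] (T : GoodTheory R G)
    (n : ℕ) (X : Type) [TopologicalSpace X] [T2Space X] [CompactSpace X]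
    (A : Set X) (hA : IsClosed A) (k : ℤ)
    (pdX : T.Hcech X ((n : ℤ) - k) ≃+ T.Hrel X (∅ : Set X) k)
    (pdA : T.Hcech (↥A) ((n : ℤ) - k) ≃+ T.Hrel X Aᶜ k)
    (hcomm : ∀ η : T.Hcech X ((n : ℤ) - k),
      pdA (T.ccmap (⟨Subtype.val, continuous_subtype_val⟩ : C(↥A, X)) ((n : ℤ) - k) η) =
      T.hmap (ContinuousMap.id X) (Set.mapsTo_empty _ _) k (pdX η))
    (ξ : T.Hrel X (∅ : Set X) k)
    (hξ : T.hmap (ContinuousMap.id X) (Set.mapsTo_empty _ _) k ξ ≠ (0 : T.Hrel X Aᶜ k)) :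
    T.ccmap (⟨Subtype.val, continuous_subtype_val⟩ : C(↥A, X)) ((n : ℤ) - k)
        (pdX.symm ξ) ≠ 0 ∧
    ((((n : ℤ) - k).toNat : ℕ∞)) ≤ covDim ↥A := by
  have hres := ne_zero_of_comm_square _ _ pdX.toEquiv pdA hcomm hξ
  have : CompactSpace A := isCompact_iff_compactSpace.mp hA.isCompact
  exact ⟨hres, T.toNat_le_covDim_of_ne_zero hres⟩

/-- Let `R` be a principal ideal domain, `X` a closed `R`-orientable
topological manifold of dimension `n`, and `A ⊆ X` a closed subset. Poincaré–Lefschetz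
duality provides isomorphisms `Ȟ^{n-k}(X;R) ≅ H_k(X;R)` and `Ȟ^{n-k}(A;R) ≅ H_k(X, X∖A;R)`
fitting into a commutative square with the restriction `i^*` on top and `π_*` on the bottom.
If a class `ξ ∈ H_k(X;R)` has non-trivial image `π_*ξ` under the map
`H_k(X;R) → H_k(X, X∖A;R)` induced by the inclusion of pairs, then the Poincaré dual
`η ∈ Ȟ^{n-k}(X;R)` of `ξ` restricts to a non-trivial class `i^*η ∈ Ȟ^{n-k}(A;R)` under the
inclusion `i : A ↪ X`; in particular the covering dimension of `A` is at least `n - k`. -/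
theorem poincare_dual_restricts_nontrivially
    {R : Type} [CommRing R] [IsDomain R] [IsPrincipalIdealRing R]
    {G : Type} [AddCommGroup G] [Module R G] (T : GoodTheory R G)
    (n : ℕ) (X : Type) [TopologicalSpace X] [T2Space X]
    [ChartedSpace (EuclideanSpace ℝ (Fin n)) X] [CompactSpace X]
    (hor : ROrientable T.toTheory n X)
    (A : Set X) (hA : IsClosed A) (k : ℤ)
    (pdX : T.Hcech X ((n : ℤ) - k) ≃+ T.Hrel X (∅ : Set X) k)
    (pdA : T.Hcech (↥A) ((n : ℤ) - k) ≃+ T.Hrel X Aᶜ k)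
    (hcomm : ∀ η : T.Hcech X ((n : ℤ) - k),
      pdA (T.ccmap (⟨Subtype.val, continuous_subtype_val⟩ : C(↥A, X)) ((n : ℤ) - k) η) =
      T.hmap (ContinuousMap.id X) (Set.mapsTo_empty _ _) k (pdX η))
    (ξ : T.Hrel X (∅ : Set X) k)
    (hξ : T.hmap (ContinuousMap.id X) (Set.mapsTo_empty _ _) k ξ ≠ (0 : T.Hrel X Aᶜ k)) :
    T.ccmap (⟨Subtype.val, continuous_subtype_val⟩ : C(↥A, X)) ((n : ℤ) - k)
        (pdX.symm ξ) ≠ 0 ∧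
    ((((n : ℤ) - k).toNat : ℕ∞)) ≤ covDim ↥A :=
  poincare_dual_restricts_nontrivially_general T n X A hA k pdX pdA hcomm ξ hξ

end
end
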